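/- arXiv:1611.06011 — 2 statements merged into one kernel-verified Lean document; each statement's English description precedes it below -/
import Mathlib

section
/- GLMB conjugacy under the hybrid likelihood (finite/discrete version): let the predicted density be π̄(X) = Δ(X) ∑_{ξ,I} ω̄^{(ξ,I)} δ_I[L(X)] [p̄^{(ξ)}]^X on finite subsets X of a finite space 𝕏 × 𝕃 with distinct labels, and let g(y|X) ∝ ∑_{θ∈Θ(L(X))} ∏_{(x,ℓ)∈X} φ^{(θ(ℓ))}_y(x,ℓ). Then the product π̄(X)·g(y|X) is proportional to Δ(X) ∑_{ξ,I,θ} ω̄^{(ξ,I)} 1_{Θ(I)}(θ) [φ̄^{(ξ,θ)}]^I δ_I[L(X)] [p^{(ξ,θ)}]^X, where φ̄^{(ξ,θ)}(ℓ) = ∑_{x∈𝕏} p̄^{(ξ)}(x,ℓ) φ^{(θ(ℓ))}_y(x,ℓ) and p^{(ξ,θ)}(x,ℓ) = p̄^{(ξ)}(x,ℓ) φ^{(θ(ℓ))}_y(x,ℓ) / φ̄^{(ξ,θ)}(ℓ), provided φ̄^{(ξ,θ)}(ℓ) > 0 for all relevant ℓ. -/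
/-!
Distribute the product over `ξ`, `I`, `θ`; the terms with `I ≠ L(X)` vanish on both sides. For
`I = L(X)`, distinct labels give `[φ̄^{(ξ,θ)}]^{L(X)} = ∏_{(x,ℓ) ∈ X} φ̄^{(ξ,θ)}(ℓ)`, so multiplying
`p̄^{(ξ)} φ^{(θ(ℓ))}_y = φ̄^{(ξ,θ)}(ℓ) p^{(ξ,θ)}` over `X` yields the new weight factor
`[φ̄^{(ξ,θ)}]^I` times `[p^{(ξ,θ)}]^X`.
-/

open Finset

theorem Finset.prod_eq_prod_image_snd_mul_prod_div {α β K : Type*} [DecidableEq β] [Field K]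
    {X : Finset (α × β)} (hX : Set.InjOn Prod.snd (X : Set (α × β)))
    (g : α × β → K) (c : β → K) (hc : ∀ p ∈ X, c p.2 ≠ 0) :
    ∏ p ∈ X, g p = (∏ b ∈ X.image Prod.snd, c b) * ∏ p ∈ X, g p / c p.2 := by
  rw [prod_image fun p hp q hq => hX hp hq, ← prod_mul_distrib]
  exact prod_congr rfl fun p hp => (mul_div_cancel₀ (g p) (hc p hp)).symm

open scoped Classical

theorem GLMB_conjugacy_hybrid_general {𝕏 𝕃 Ξ : Type*} [Fintype 𝕃] [Fintype Ξ]
    [DecidableEq 𝕃] (M : ℕ)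
    (ωbar : Ξ → Finset 𝕃 → ℝ)
    (pbar : Ξ → 𝕏 → 𝕃 → ℝ)
    (φ : ℕ → 𝕏 → 𝕃 → ℝ)
    -- normalizers
    (φbar : Ξ → (𝕃 → Fin (M + 1)) → 𝕃 → ℝ)
    (hφbar_pos : ∀ ξ θ ℓ, 0 < φbar ξ θ ℓ)
    -- updated densities
    (pupd : Ξ → (𝕃 → Fin (M + 1)) → 𝕏 → 𝕃 → ℝ)
    (hpupd : ∀ ξ θ x ℓ, pupd ξ θ x ℓ = pbar ξ x ℓ * φ (θ ℓ : ℕ) x ℓ / φbar ξ θ ℓ)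
    (X : Finset (𝕏 × 𝕃)) (hX : Set.InjOn Prod.snd (X : Set (𝕏 × 𝕃))) :
    (∑ ξ : Ξ, ∑ I : Finset 𝕃,
        ωbar ξ I * (if X.image Prod.snd = I then (1 : ℝ) else 0) *
          ∏ p ∈ X, pbar ξ p.1 p.2) *
      (∑ θ ∈ Finset.univ.filter
          (fun θ : 𝕃 → Fin (M + 1) =>
            Set.InjOn θ {ℓ | ℓ ∈ X.image Prod.snd ∧ 0 < (θ ℓ : ℕ)}),
          ∏ p ∈ X, φ (θ p.2 : ℕ) p.1 p.2) =
    ∑ ξ : Ξ, ∑ I : Finset 𝕃, ∑ θ : 𝕃 → Fin (M + 1),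
        ωbar ξ I *
          (if Set.InjOn θ {ℓ | ℓ ∈ (I : Set 𝕃) ∧ 0 < (θ ℓ : ℕ)} then (1 : ℝ) else 0) *
          (∏ ℓ ∈ I, φbar ξ θ ℓ) *
          (if X.image Prod.snd = I then (1 : ℝ) else 0) *
          ∏ p ∈ X, pupd ξ θ p.1 p.2 := by
  rw [sum_mul]
  refine sum_congr rfl fun ξ _ => ?_
  rw [sum_mul]
  refine sum_congr rfl fun I _ => ?_
  rw [mul_sum, sum_filter]
  refine sum_congr rfl fun θ _ => ?_
  obtain rfl | hI := eq_or_ne (X.image Prod.snd) I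
  · have hfactor : ∏ p ∈ X, pbar ξ p.1 p.2 * φ (θ p.2) p.1 p.2 =
        (∏ ℓ ∈ X.image Prod.snd, φbar ξ θ ℓ) * ∏ p ∈ X, pupd ξ θ p.1 p.2 := by
      simp only [hpupd]
      exact prod_eq_prod_image_snd_mul_prod_div hX _ _ fun p _ => (hφbar_pos ξ θ p.2).ne'
    simp only [mem_coe, if_true, mul_one]
    split_ifs
    · rw [mul_assoc, ← prod_mul_distrib, hfactor]
      ring
    · simp
  · simp [hI]

/-- GLMB conjugacy under the hybrid likelihood (finite/discrete version):
for any labeled multi-object state `X` with distinct labels, the product of the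
predicted GLMB density and the hybrid likelihood equals the GLMB-form expression
with updated weights `ω̄^{(ξ,I)} 1_{Θ(I)}(θ) [φ̄^{(ξ,θ)}]^I` and updated
single-object densities `p^{(ξ,θ)} = p̄^{(ξ)} φ^{(θ(ℓ))}_y / φ̄^{(ξ,θ)}(ℓ)`. -/
theorem GLMB_conjugacy_hybrid {𝕏 𝕃 Ξ : Type*} [Fintype 𝕏] [Fintype 𝕃] [Fintype Ξ]
    [DecidableEq 𝕃] (M : ℕ)
    (ωbar : Ξ → Finset 𝕃 → ℝ)
    (pbar : Ξ → 𝕏 → 𝕃 → ℝ)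
    (hpbar_nonneg : ∀ ξ x ℓ, 0 ≤ pbar ξ x ℓ)
    (hpbar_sum : ∀ ξ ℓ, ∑ x : 𝕏, pbar ξ x ℓ = 1)
    (φ : ℕ → 𝕏 → 𝕃 → ℝ)
    (hφ : ∀ j x ℓ, 0 ≤ φ j x ℓ)
    -- normalizers
    (φbar : Ξ → (𝕃 → Fin (M + 1)) → 𝕃 → ℝ)
    (hφbar : ∀ ξ θ ℓ, φbar ξ θ ℓ = ∑ x : 𝕏, pbar ξ x ℓ * φ (θ ℓ : ℕ) x ℓ)
    (hφbar_pos : ∀ ξ θ ℓ, 0 < φbar ξ θ ℓ)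
    -- updated densities
    (pupd : Ξ → (𝕃 → Fin (M + 1)) → 𝕏 → 𝕃 → ℝ)
    (hpupd : ∀ ξ θ x ℓ, pupd ξ θ x ℓ = pbar ξ x ℓ * φ (θ ℓ : ℕ) x ℓ / φbar ξ θ ℓ)
    (X : Finset (𝕏 × 𝕃)) (hX : Set.InjOn Prod.snd (X : Set (𝕏 × 𝕃))) :
    (∑ ξ : Ξ, ∑ I : Finset 𝕃,
        ωbar ξ I * (if X.image Prod.snd = I then (1 : ℝ) else 0) *
          ∏ p ∈ X, pbar ξ p.1 p.2) *
      (∑ θ ∈ Finset.univ.filter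
          (fun θ : 𝕃 → Fin (M + 1) =>
            Set.InjOn θ {ℓ | ℓ ∈ X.image Prod.snd ∧ 0 < (θ ℓ : ℕ)}),
          ∏ p ∈ X, φ (θ p.2 : ℕ) p.1 p.2) =
    ∑ ξ : Ξ, ∑ I : Finset 𝕃, ∑ θ : 𝕃 → Fin (M + 1),
        ωbar ξ I *
          (if Set.InjOn θ {ℓ | ℓ ∈ (I : Set 𝕃) ∧ 0 < (θ ℓ : ℕ)} then (1 : ℝ) else 0) *
          (∏ ℓ ∈ I, φbar ξ θ ℓ) *
          (if X.image Prod.snd = I then (1 : ℝ) else 0) *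
          ∏ p ∈ X, pupd ξ θ p.1 p.2 :=
  GLMB_conjugacy_hybrid_general M ωbar pbar φ φbar hφbar_pos pupd hpupd X hX
end

section
/- If a GLMB density π on finite labeled subsets of a finite space 𝕏 × 𝕃 is normalized (weights sum to 1 and each p^{(ξ)}(·,ℓ) is a probability distribution), then its set integral equals 1: ∑_{n=0}^{|𝕏×𝕃|} (1/n!) ∑_{(x_1,...,x_n) distinct} π({x_1,...,x_n}) = 1. -/
/-!
A labeled set with distinct labels and label set `I` is exactly the graph `{(g ℓ, ℓ) | ℓ ∈ I}` of
a function `g : I → 𝕏`. Hence summing `∏_{(x, ℓ) ∈ X} p(x, ℓ)` over these sets is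
`∑_g ∏_ℓ p(g ℓ, ℓ) = ∏_{ℓ ∈ I} ∑_x p(x, ℓ) = 1`, and the set integral of `π` collapses to
`∑_{ξ, I} ω^{(I,ξ)} = 1`.
-/

open scoped Classical

section LabeledGraph

open Finset

variable {α β : Type*}

def labeledGraph (I : Finset β) (g : I → α) : Finset (α × β) :=
  univ.map ⟨fun ℓ => (g ℓ, ℓ.1), fun _ _ h => Subtype.ext (Prod.ext_iff.mp h).2⟩

@[simp]
theorem mem_labeledGraph {I : Finset β} {g : I → α} {q : α × β} :
    q ∈ labeledGraph I g ↔ ∃ ℓ : I, (g ℓ, ℓ.1) = q := by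
  simp only [labeledGraph, mem_map, mem_univ, true_and]
  rfl

theorem prod_labeledGraph {R : Type*} [CommMonoid R] (f : α × β → R) {I : Finset β} (g : I → α) :
    ∏ q ∈ labeledGraph I g, f q = ∏ ℓ : I, f (g ℓ, ℓ) :=
  prod_map _ _ _

theorem labeledGraph_injective (I : Finset β) :
    Function.Injective (labeledGraph (α := α) I) := by
  intro g h hgh
  funext ℓ
  have hmem : (g ℓ, ℓ.1) ∈ labeledGraph I h := hgh ▸ mem_labeledGraph.mpr ⟨ℓ, rfl⟩
  obtain ⟨ℓ', hℓ'⟩ := mem_labeledGraph.mp hmem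
  obtain ⟨hx, hℓ⟩ := Prod.mk_inj.mp hℓ'
  rw [Subtype.ext hℓ] at hx
  exact hx.symm

theorem injOn_snd_and_image_snd_eq_iff [DecidableEq β] {X : Finset (α × β)} {I : Finset β} :
    Set.InjOn Prod.snd (X : Set (α × β)) ∧ X.image Prod.snd = I ↔
      ∃ g : I → α, labeledGraph I g = X := by
  constructor
  · rintro ⟨hinj, rfl⟩
    have hfiber (ℓ : X.image Prod.snd) : ∃ x, (x, ℓ.1) ∈ X := by
      obtain ⟨q, hq, hqℓ⟩ := mem_image.mp ℓ.2
      exact ⟨q.1, hqℓ ▸ hq⟩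
    choose g hg using hfiber
    refine ⟨g, ext fun q => ⟨?_, fun hq => ?_⟩⟩
    · rw [mem_labeledGraph]
      rintro ⟨ℓ, rfl⟩
      exact hg ℓ
    · exact mem_labeledGraph.mpr ⟨⟨q.2, mem_image_of_mem _ hq⟩, hinj (hg _) hq rfl⟩
  · rintro ⟨g, rfl⟩
    refine ⟨?_, ?_⟩
    · rintro _ hq _ hq' hqq'
      obtain ⟨ℓ, rfl⟩ := mem_labeledGraph.mp hq
      obtain ⟨ℓ', rfl⟩ := mem_labeledGraph.mp hq'
      rw [Subtype.ext hqq']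
    · ext ℓ
      simp

variable [Fintype α] [Fintype β] [DecidableEq β]

def labeledSets (I : Finset β) : Finset (Finset (α × β)) :=
  univ.filter fun X => Set.InjOn Prod.snd (X : Set (α × β)) ∧ X.image Prod.snd = I

theorem labeledSets_eq_image_labeledGraph (I : Finset β) :
    labeledSets (α := α) I = univ.image (labeledGraph I) := by
  ext X
  simp [labeledSets, injOn_snd_and_image_snd_eq_iff]

theorem sum_labeledSets_prod {R : Type*} [CommSemiring R] (f : α × β → R) (I : Finset β) :
    ∑ X ∈ labeledSets I, ∏ q ∈ X, f q = ∏ ℓ ∈ I, ∑ x, f (x, ℓ) := by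
  rw [labeledSets_eq_image_labeledGraph, sum_image (labeledGraph_injective I).injOn,
    ← prod_coe_sort, Fintype.prod_sum]
  exact sum_congr rfl fun g _ => prod_labeledGraph f g

end LabeledGraph

theorem GLMB_set_integral_eq_one_general {𝕏 𝕃 Ξ : Type*} [Fintype 𝕏] [Fintype 𝕃] [Fintype Ξ]
    [DecidableEq 𝕃]
    (ω : Ξ → Finset 𝕃 → ℝ)
    (hωsum : ∑ ξ : Ξ, ∑ I : Finset 𝕃, ω ξ I = 1)
    (p : Ξ → 𝕏 → 𝕃 → ℝ)
    (hp_sum : ∀ ξ ℓ, ∑ x : 𝕏, p ξ x ℓ = 1)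
    (π : Finset (𝕏 × 𝕃) → ℝ)
    (hπ : ∀ X, π X =
      (if Set.InjOn Prod.snd (X : Set (𝕏 × 𝕃)) then (1 : ℝ) else 0) *
        ∑ ξ : Ξ, ∑ I : Finset 𝕃,
          ω ξ I * (if X.image Prod.snd = I then (1 : ℝ) else 0) *
            ∏ q ∈ X, p ξ q.1 q.2) :
    ∑ X : Finset (𝕏 × 𝕃), π X = 1 := by
  calc ∑ X, π X
      = ∑ ξ, ∑ I, ω ξ I * ∑ X ∈ labeledSets I, ∏ q ∈ X, p ξ q.1 q.2 := by
        simp_rw [hπ, labeledSets, Finset.sum_filter, Finset.mul_sum]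
        rw [Finset.sum_comm]
        refine Finset.sum_congr rfl fun ξ _ => ?_
        rw [Finset.sum_comm]
        refine Finset.sum_congr rfl fun I _ => Finset.sum_congr rfl fun X _ => ?_
        split_ifs <;> simp_all
    _ = ∑ ξ, ∑ I, ω ξ I := by simp [sum_labeledSets_prod, hp_sum]
    _ = 1 := hωsum

/-- A normalized GLMB density on finite labeled subsets of a finite space
`𝕏 × 𝕃` has set integral equal to 1 (in the discrete setting the set integral
is the sum of `π` over all finite subsets of `𝕏 × 𝕃`). -/
theorem GLMB_set_integral_eq_one {𝕏 𝕃 Ξ : Type*} [Fintype 𝕏] [Fintype 𝕃] [Fintype Ξ]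
    [DecidableEq 𝕏] [DecidableEq 𝕃]
    (ω : Ξ → Finset 𝕃 → ℝ)
    (hω : ∀ ξ I, 0 ≤ ω ξ I)
    (hωsum : ∑ ξ : Ξ, ∑ I : Finset 𝕃, ω ξ I = 1)
    (p : Ξ → 𝕏 → 𝕃 → ℝ)
    (hp_nonneg : ∀ ξ x ℓ, 0 ≤ p ξ x ℓ)
    (hp_sum : ∀ ξ ℓ, ∑ x : 𝕏, p ξ x ℓ = 1)
    (π : Finset (𝕏 × 𝕃) → ℝ)
    (hπ : ∀ X, π X =
      (if Set.InjOn Prod.snd (X : Set (𝕏 × 𝕃)) then (1 : ℝ) else 0) *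
        ∑ ξ : Ξ, ∑ I : Finset 𝕃,
          ω ξ I * (if X.image Prod.snd = I then (1 : ℝ) else 0) *
            ∏ q ∈ X, p ξ q.1 q.2) :
    ∑ X : Finset (𝕏 × 𝕃), π X = 1 :=
  GLMB_set_integral_eq_one_general ω hωsum p hp_sum π hπ
end
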